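/- The algebra A_2 = ⟨A_2; t⟩ is not solvable: for every n ∈ ω, [1]_n ≠ 0, where [1]_0 = 1 and [1]_{n+1} = [[1]_n, [1]_n] is the derived series with respect to the binary term condition commutator. -/
import Mathlib


/-- The carrier of the algebra `𝔸₂ = ⟨A₂; t⟩`: `O = {oᵢʲ}`, `R = {rᵢʲ}`, and
`G` the set of formal products, so that `A2.g : A2² → G` is a fixed injection. -/
inductive A2 : Type where
  | o (i j : ℕ) : A2
  | r (i j : ℕ) : A2
  | g (x y : A2) : A2
deriving DecidableEq

/-- The binary operation `t` of `𝔸₂`: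
`t(r₄ᵢʲ, r₄ᵢʲ) = t(r₄ᵢʲ, r₄ᵢ₊₂ʲ) = oᵢʲ`, `t(r₄ᵢ₊₂ʲ, r₄ᵢʲ) = rᵢʲ⁺¹`,
`t(r₄ᵢ₊₂ʲ, r₄ᵢ₊₂ʲ) = rᵢ₊₁ʲ⁺¹`, and otherwise `t(x,y) = s(x,y)` for a fixed
injection `s : A₂² → G`. -/
def t2 : A2 → A2 → A2 :=
  fun x y =>
    match x, y with
    | .r a j, .r b l =>
        if l = j ∧ a % 4 = 0 ∧ (b = a ∨ b = a + 2) then .o (a / 4) j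
        else if l = j ∧ a % 4 = 2 ∧ b + 2 = a then .r (a / 4) (j + 1)
        else if l = j ∧ a % 4 = 2 ∧ b = a then .r (a / 4 + 1) (j + 1)
        else .g x y
    | x, y => .g x y

/-- A congruence of `𝔸₂`: an equivalence relation compatible with `t`. -/
def IsCon2 (θ : A2 → A2 → Prop) : Prop :=
  Equivalence θ ∧ ∀ a b c d : A2, θ a b → θ c d → θ (t2 a c) (t2 b d)

/-- `M(α,β)`: the subalgebra of `𝔸₂⁴` generated by
`{(x,x;y,y) : (x,y) ∈ α} ∪ {(c,d;c,d) : (c,d) ∈ β}`.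
A quadruple `(h₁,h₂,h₃,h₄)` represents the square with columns `(h₁,h₂)`, `(h₃,h₄)`. -/
inductive Msq (α β : A2 → A2 → Prop) : A2 × A2 × A2 × A2 → Prop where
  | genA (x y : A2) : α x y → Msq α β (x, x, y, y)
  | genB (c d : A2) : β c d → Msq α β (c, d, c, d)
  | app (a₁ a₂ a₃ a₄ b₁ b₂ b₃ b₄ : A2) :
      Msq α β (a₁, a₂, a₃, a₄) → Msq α β (b₁, b₂, b₃, b₄) →
      Msq α β (t2 a₁ b₁, t2 a₂ b₂, t2 a₃ b₃, t2 a₄ b₄)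

/-- The centrality condition `C(α,β;δ)`: for every square in `M(α,β)`, if the
support column is a `δ`-pair then so is the pivot column. -/
def Cen (α β δ : A2 → A2 → Prop) : Prop :=
  ∀ h₁ h₂ h₃ h₄ : A2, Msq α β (h₁, h₂, h₃, h₄) → δ h₁ h₂ → δ h₃ h₄

/-- The binary term condition commutator `[α,β]`: the least congruence `δ`
such that `C(α,β;δ)` holds. -/
def comm2 (α β : A2 → A2 → Prop) : A2 → A2 → Prop :=
  fun a b => ∀ δ : A2 → A2 → Prop, IsCon2 δ → Cen α β δ → δ a b

/-- The derived series `[1]₀ = 1`, `[1]_{j+1} = [[1]_j, [1]_j]`. -/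
def dser2 : ℕ → A2 → A2 → Prop
  | 0 => fun _ _ => True
  | j + 1 => comm2 (dser2 j) (dser2 j)

lemma t2_a : ∀ i j : ℕ, t2 (A2.r (4*i) j) (A2.r (4*i+2) j) = A2.o i j := by
  intro i j
  simp only [t2]
  rw [if_pos]
  · simp [Nat.mul_div_cancel_left]
  · simp

lemma t2_b : ∀ i j : ℕ, t2 (A2.r (4*i) j) (A2.r (4*i) j) = A2.o i j := by
  intro i j
  simp only [t2]
  rw [if_pos]
  · simp [Nat.mul_div_cancel_left]
  · simp

lemma t2_c : ∀ i j : ℕ, t2 (A2.r (4*i+2) j) (A2.r (4*i+2) j) = A2.r (i+1) (j+1) := by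
  intro i j
  simp only [t2]
  rw [if_neg (by simp <;> omega), if_neg (by simp <;> omega), if_pos (by simp <;> omega)]
  congr 1
  omega

lemma t2_d : ∀ i j : ℕ, t2 (A2.r (4*i+2) j) (A2.r (4*i) j) = A2.r i (j+1) := by
  intro i j
  simp only [t2]
  rw [if_neg (by simp <;> omega), if_pos (by simp <;> omega)]
  congr 1
  omega

lemma key (j : ℕ) (α : A2 → A2 → Prop)
    (hα : ∀ a b : ℕ, α (A2.r a j) (A2.r b j)) :
    ∀ a b : ℕ, comm2 α α (A2.r a (j+1)) (A2.r b (j+1)) := by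
  have step : ∀ (δ : A2 → A2 → Prop), IsCon2 δ → Cen α α δ →
      ∀ i, δ (A2.r (i+1) (j+1)) (A2.r i (j+1)) := by
    intro δ hδ hc i
    have hm := Msq.app (α := α) (β := α) _ _ _ _ _ _ _ _
      (Msq.genA (A2.r (4*i) j) (A2.r (4*i+2) j) (hα _ _))
      (Msq.genB (A2.r (4*i+2) j) (A2.r (4*i) j) (hα _ _))
    rw [t2_a, t2_b, t2_c, t2_d] at hm
    exact hc _ _ _ _ hm (hδ.1.refl _)
  have chain : ∀ (δ : A2 → A2 → Prop), IsCon2 δ → Cen α α δ →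
      ∀ i, δ (A2.r 0 (j+1)) (A2.r i (j+1)) := by
    intro δ hδ hc i
    induction i with
    | zero => exact hδ.1.refl _
    | succ k ih => exact hδ.1.trans ih (hδ.1.symm (step δ hδ hc k))
  intro a b δ hδ hc
  exact hδ.1.trans (hδ.1.symm (chain δ hδ hc a)) (chain δ hδ hc b)

lemma dser2_r : ∀ n a b : ℕ, dser2 n (A2.r a n) (A2.r b n) := by
  intro n
  induction n with
  | zero => intro a b; trivial
  | succ j ih => exact key j (dser2 j) ih

/-- `𝔸₂` is not solvable: no term of the derived series is the trivial
(equality) congruence. -/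
theorem stmt8 : ∀ n : ℕ, ¬ (∀ a b : A2, dser2 n a b → a = b) := by
  intro n h
  have := h _ _ (dser2_r n 0 1)
  simp at this
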